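/- For every action j ∈ Fin K and every horizon T, the EXP3.BwK weight recursion satisfies (c_min·γ/K)·∑_{t=0}^{T−1} ê_t(j) − log K ≤ ((c_min·γ/K)/(1−γ))·∑_{t=0}^{T−1} r_t/c_t + ((e−2)·c_min·(γ/K)²/(1−γ))·∑_{t=0}^{T−1} ∑_{i} ê_t(i), where e = exp(1). (The condition γ·c_min·ê_t(i)/K ≤ 1 needed for the analysis holds automatically because p_t(i) ≥ γ/K.) -/

import Mathlib

/-!
The potential `log ∑ᵢ wₜ(i)` starts at `log K` and dominates the log-weight
`(c_min γ / K) ∑ₜ êₜ(j)` of any single arm. In round `t` it grows by at most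
`∑ᵢ qₜ(i) (zᵢ + (e - 2) zᵢ²)`, where `qₜ = wₜ / ∑ wₜ` and `zᵢ = γ c_min êₜ(i) / K ∈ [0, 1]`,
by `eˣ ≤ 1 + x + (e - 2) x²` on `[0, 1]` and `log (1 + a) ≤ a`. Since `(1 - γ) qₜ ≤ pₜ`, this
is at most `1 / (1 - γ)` times the same sum against `pₜ`, and importance weighting gives
`∑ᵢ pₜ(i) êₜ(i) = rₜ / cₜ` and `pₜ(i) êₜ(i) ≤ 1 / c_min`.
-/

open Finset Real
open scoped Nat

lemma Real.exp_le_one_add_add_exp_one_sub_two_mul_sq {x : ℝ} (h0 : 0 ≤ x) (h1 : x ≤ 1) :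
    exp x ≤ 1 + x + (exp 1 - 2) * x ^ 2 := by
  have hexp (y : ℝ) : exp y = 1 + y + ∑' n : ℕ, y ^ (n + 2) / (n + 2)! := by
    rw [exp_eq_exp_ℝ, NormedSpace.exp_eq_tsum_div]
    beta_reduce
    rw [← (summable_pow_div_factorial y).sum_add_tsum_nat_add 2]
    simp [sum_range_succ]
  have htail : ∑' n : ℕ, x ^ (n + 2) / (n + 2)! ≤
      ∑' n : ℕ, x ^ 2 * ((1 : ℝ) ^ (n + 2) / (n + 2)!) := by
    refine Summable.tsum_le_tsum (fun n => ?_)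
      ((summable_pow_div_factorial x).comp_injective (add_left_injective 2))
      (((summable_pow_div_factorial 1).comp_injective (add_left_injective 2)).mul_left _)
    rw [one_pow, mul_one_div, pow_add, mul_comm]
    gcongr
    exact mul_le_of_le_one_right (sq_nonneg x) (pow_le_one₀ h0 h1)
  have htail_one : ∑' n : ℕ, (1 : ℝ) ^ (n + 2) / (n + 2)! = exp 1 - 2 := by
    linarith [hexp 1]
  rw [tsum_mul_left, htail_one] at htail
  linarith [hexp x]

lemma Real.exp_one_sub_two_nonneg : 0 ≤ exp 1 - 2 := by
  linarith [exp_one_gt_d9]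

lemma Real.log_sum_mul_exp_le {ι : Type*} [Fintype ι] {w z : ι → ℝ} (hw : ∀ i, 0 ≤ w i)
    (hW : 0 < ∑ i, w i) (hz0 : ∀ i, 0 ≤ z i) (hz1 : ∀ i, z i ≤ 1) :
    log (∑ i, w i * exp (z i)) ≤
      log (∑ i, w i) + ∑ i, w i / (∑ j, w j) * (z i + (exp 1 - 2) * z i ^ 2) := by
  set W := ∑ i, w i
  set A := ∑ i, w i / W * (z i + (exp 1 - 2) * z i ^ 2)
  have hA : 0 ≤ A := sum_nonneg fun i _ =>
    mul_nonneg (div_nonneg (hw i) hW.le)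
      (add_nonneg (hz0 i) (mul_nonneg exp_one_sub_two_nonneg (sq_nonneg _)))
  have hsum : ∑ i, w i * exp (z i) ≤ W * (1 + A) := calc
    ∑ i, w i * exp (z i) ≤ ∑ i, w i * (1 + z i + (exp 1 - 2) * z i ^ 2) :=
      sum_le_sum fun i _ => mul_le_mul_of_nonneg_left
        (exp_le_one_add_add_exp_one_sub_two_mul_sq (hz0 i) (hz1 i)) (hw i)
    _ = ∑ i, (w i + W * (w i / W * (z i + (exp 1 - 2) * z i ^ 2))) :=
      sum_congr rfl fun i _ => by field_simp; ring
    _ = W * (1 + A) := by rw [sum_add_distrib, ← mul_sum]; ring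
  have hpos : 0 < ∑ i, w i * exp (z i) :=
    hW.trans_le (sum_le_sum fun i _ => le_mul_of_one_le_right (hw i) (one_le_exp (hz0 i)))
  calc log (∑ i, w i * exp (z i)) ≤ log (W * (1 + A)) := log_le_log hpos hsum
    _ = log W + log (1 + A) := log_mul hW.ne' (by positivity)
    _ ≤ log W + A := by linarith [log_le_sub_one_of_pos (by positivity : 0 < 1 + A)]

lemma eq_exp_sum_range_of_mul_exp {f g : ℕ → ℝ} (h0 : f 0 = 1)
    (hf : ∀ t, f (t + 1) = f t * exp (g t)) (T : ℕ) : f T = exp (∑ t ∈ range T, g t) := by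
  induction T with
  | zero => simp [h0]
  | succ T ih => rw [hf, ih, sum_range_succ, exp_add]

lemma sub_le_sum_range_of_succ_sub_le {f a : ℕ → ℝ} (h : ∀ t, f (t + 1) - f t ≤ a t) (T : ℕ) :
    f T - f 0 ≤ ∑ t ∈ range T, a t := by
  rw [← sum_range_sub]
  exact sum_le_sum fun t _ => h t

section EfficiencyEstimate

variable {ι : Type*} [DecidableEq ι]

/-- The importance-weighted estimate of `r / c` for arm `i` when arm `a` was drawn from `p`. -/
noncomputable def efficiencyEstimate (p : ι → ℝ) (a : ι) (r c : ℝ) (i : ι) : ℝ :=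
  if i = a then r / (p i * c) else 0

variable {p : ι → ℝ} {a : ι} {r c : ℝ}

lemma efficiencyEstimate_nonneg (hp : ∀ i, 0 < p i) (hr : 0 ≤ r) (hc : 0 < c) (i : ι) :
    0 ≤ efficiencyEstimate p a r c i := by
  unfold efficiencyEstimate
  split_ifs
  · exact div_nonneg hr (mul_pos (hp i) hc).le
  · exact le_rfl

lemma mul_efficiencyEstimate {i : ι} (hp : p i ≠ 0) :
    p i * efficiencyEstimate p a r c i = if i = a then r / c else 0 := by
  unfold efficiencyEstimate
  split_ifs
  · rw [mul_div_assoc', mul_div_mul_left _ _ hp]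
  · rw [mul_zero]

lemma sum_mul_efficiencyEstimate [Fintype ι] (hp : p a ≠ 0) :
    ∑ i, p i * efficiencyEstimate p a r c i = r / c := by
  rw [Fintype.sum_eq_single a fun i hi => by simp [efficiencyEstimate, hi],
    mul_efficiencyEstimate hp, if_pos rfl]

lemma mul_efficiencyEstimate_le {cmin : ℝ} (hc0 : 0 < cmin) (hc : cmin ≤ c) (hr1 : r ≤ 1)
    {i : ι} (hp : p i ≠ 0) :
    p i * efficiencyEstimate p a r c i ≤ 1 / cmin := by
  rw [mul_efficiencyEstimate hp]
  split_ifs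
  · exact div_le_div₀ zero_le_one hr1 hc0 hc
  · positivity

lemma sum_mul_efficiencyEstimate_add_sq_le [Fintype ι] {cmin η E : ℝ} (hp : ∀ i, 0 < p i)
    (hc0 : 0 < cmin) (hc : cmin ≤ c) (hr0 : 0 ≤ r) (hr1 : r ≤ 1) (hE : 0 ≤ E) :
    ∑ i, p i * (η * efficiencyEstimate p a r c i + E * (η * efficiencyEstimate p a r c i) ^ 2)
      ≤ η * (r / c) + E * η ^ 2 / cmin * ∑ i, efficiencyEstimate p a r c i := by
  set e := efficiencyEstimate p a r c
  have he0 : ∀ i, 0 ≤ e i := efficiencyEstimate_nonneg hp hr0 (hc0.trans_le hc)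
  have hterm (i : ι) : p i * (η * e i + E * (η * e i) ^ 2)
      ≤ η * (p i * e i) + E * η ^ 2 / cmin * e i := calc
    _ = η * (p i * e i) + E * η ^ 2 * (p i * e i) * e i := by ring
    _ ≤ η * (p i * e i) + E * η ^ 2 * (1 / cmin) * e i := by
        gcongr
        · exact he0 i
        · exact mul_efficiencyEstimate_le hc0 hc hr1 (hp i).ne'
    _ = _ := by ring
  refine (sum_le_sum fun i _ => hterm i).trans_eq ?_
  rw [sum_add_distrib, ← mul_sum, ← mul_sum, sum_mul_efficiencyEstimate (hp a).ne']

end EfficiencyEstimate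

lemma sum_mul_le_sum_mul_div_of_mul_le {ι : Type*} [Fintype ι] {q p g : ι → ℝ} {γ : ℝ}
    (hγ : γ < 1) (hqp : ∀ i, (1 - γ) * q i ≤ p i) (hg : ∀ i, 0 ≤ g i) :
    ∑ i, q i * g i ≤ (∑ i, p i * g i) / (1 - γ) := by
  rw [le_div_iff₀ (sub_pos.2 hγ), sum_mul]
  exact sum_le_sum fun i _ => by nlinarith [hqp i, hg i]

lemma log_sum_mul_exp_efficiencyEstimate_le {ι : Type*} [Fintype ι] [DecidableEq ι]
    {K γ cmin r c : ℝ} {a : ι} {w p : ι → ℝ} (hK : 0 < K) (hγ0 : 0 < γ) (hγ1 : γ < 1)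
    (hc0 : 0 < cmin) (hr0 : 0 ≤ r) (hr1 : r ≤ 1) (hc : cmin ≤ c)
    (hw : ∀ i, 0 ≤ w i) (hW : 0 < ∑ i, w i)
    (hp : ∀ i, p i = (1 - γ) * w i / (∑ j, w j) + γ / K) :
    log (∑ i, w i * exp (γ * cmin * efficiencyEstimate p a r c i / K)) ≤
      log (∑ i, w i) + ((cmin * γ / K) / (1 - γ)) * (r / c)
        + ((exp 1 - 2) * cmin * (γ / K) ^ 2 / (1 - γ)) * ∑ i, efficiencyEstimate p a r c i := by
  set e := efficiencyEstimate p a r c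
  set W := ∑ i, w i
  set η := γ * cmin / K
  simp_rw [mul_div_right_comm (γ * cmin) (e _) K]
  have hp' (i : ι) : p i = (1 - γ) * (w i / W) + γ / K := by rw [hp, mul_div_assoc]
  have hp_lb (i : ι) : γ / K ≤ p i := by
    linarith [hp' i, mul_nonneg (sub_nonneg.2 hγ1.le) (div_nonneg (hw i) hW.le)]
  have hp_pos (i : ι) : 0 < p i := (div_pos hγ0 hK).trans_le (hp_lb i)
  have he0 : ∀ i, 0 ≤ e i := efficiencyEstimate_nonneg hp_pos hr0 (hc0.trans_le hc)
  have hz0 (i : ι) : 0 ≤ η * e i := mul_nonneg (by positivity) (he0 i)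
  have hz1 (i : ι) : η * e i ≤ 1 := by
    have := (mul_le_mul_of_nonneg_right (hp_lb i) (he0 i)).trans
      (mul_efficiencyEstimate_le hc0 hc hr1 (hp_pos i).ne')
    rw [le_div_iff₀ hc0] at this
    calc η * e i = γ / K * e i * cmin := by ring
      _ ≤ 1 := this
  calc log (∑ i, w i * exp (η * e i))
      ≤ log W + ∑ i, w i / W * (η * e i + (exp 1 - 2) * (η * e i) ^ 2) :=
        log_sum_mul_exp_le hw hW hz0 hz1
    _ ≤ log W + (∑ i, p i * (η * e i + (exp 1 - 2) * (η * e i) ^ 2)) / (1 - γ) := by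
        gcongr
        exact sum_mul_le_sum_mul_div_of_mul_le hγ1 (fun i => by linarith [hp' i, div_pos hγ0 hK])
          fun i => add_nonneg (hz0 i) (mul_nonneg exp_one_sub_two_nonneg (sq_nonneg _))
    _ ≤ log W + (η * (r / c) + (exp 1 - 2) * η ^ 2 / cmin * ∑ i, e i) / (1 - γ) := by
        gcongr
        exact sum_mul_efficiencyEstimate_add_sq_le hp_pos hc0 hc hr0 hr1 exp_one_sub_two_nonneg
    _ = _ := by
        have : c ≠ 0 := (hc0.trans_le hc).ne'
        have : 1 - γ ≠ 0 := (sub_pos.2 hγ1).ne'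
        simp only [η]
        field_simp
        ring

open Finset in
theorem exp3_bwk_main_recursion_bound_general
    (K : ℕ) (γ : ℝ) (hγ0 : 0 < γ) (hγ1 : γ < 1)
    (cmin : ℝ) (hc0 : 0 < cmin)
    (it : ℕ → Fin K) (r c : ℕ → ℝ)
    (hr : ∀ t, 0 ≤ r t ∧ r t ≤ 1)
    (hc : ∀ t, cmin ≤ c t ∧ c t ≤ 1)
    (w : ℕ → Fin K → ℝ) (p : ℕ → Fin K → ℝ) (ehat : ℕ → Fin K → ℝ)
    (hw0 : ∀ i, w 0 i = 1)
    (hp : ∀ t i, p t i = (1 - γ) * w t i / (∑ j, w t j) + γ / K)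
    (hehat : ∀ t i, ehat t i = if i = it t then r t / (p t i * c t) else 0)
    (hwrec : ∀ t i, w (t + 1) i = w t i * Real.exp (γ * cmin * ehat t i / K))
    (j : Fin K) (T : ℕ) :
    (cmin * γ / K) * (∑ t ∈ range T, ehat t j) - Real.log K ≤
      ((cmin * γ / K) / (1 - γ)) * ∑ t ∈ range T, r t / c t
        + ((Real.exp 1 - 2) * cmin * (γ / K) ^ 2 / (1 - γ)) *
            ∑ t ∈ range T, ∑ i, ehat t i := by
  have hehat' (t : ℕ) : ehat t = efficiencyEstimate (p t) (it t) (r t) (c t) := funext (hehat t)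
  have hw (t : ℕ) (i : Fin K) : w t i = exp (∑ s ∈ range t, γ * cmin * ehat s i / K) :=
    eq_exp_sum_range_of_mul_exp (f := fun t => w t i) (hw0 i) (fun s => hwrec s i) t
  have hw_pos (t : ℕ) (i : Fin K) : 0 < w t i := hw t i ▸ exp_pos _
  have hW (t : ℕ) : 0 < ∑ i, w t i := sum_pos (fun i _ => hw_pos t i) ⟨j, mem_univ j⟩
  have hround (t : ℕ) : log (∑ i, w (t + 1) i) - log (∑ i, w t i) ≤
      ((cmin * γ / K) / (1 - γ)) * (r t / c t)
        + ((exp 1 - 2) * cmin * (γ / K) ^ 2 / (1 - γ)) * ∑ i, ehat t i := by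
    simp only [hwrec, hehat']
    linarith [log_sum_mul_exp_efficiencyEstimate_le (a := it t) (Nat.cast_pos.2 j.pos) hγ0 hγ1 hc0
      (hr t).1 (hr t).2 (hc t).1 (fun i => (hw_pos t i).le) (hW t) (hp t)]
  have hpotential := sub_le_sum_range_of_succ_sub_le (f := fun t => log (∑ i, w t i)) hround T
  have hW0 : ∑ i, w 0 i = K := by simp [hw0]
  rw [hW0, sum_add_distrib, ← mul_sum, ← mul_sum] at hpotential
  have harm : (cmin * γ / K) * (∑ t ∈ range T, ehat t j) ≤ log (∑ i, w T i) := by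
    have := log_le_log (hw_pos T j) (single_le_sum (fun i _ => (hw_pos T i).le) (mem_univ j))
    rw [hw, log_exp, ← sum_div, ← mul_sum] at this
    exact (le_of_eq (by ring)).trans this
  linarith

open Finset in
theorem exp3_bwk_main_recursion_bound
    (K : ℕ) (hK : 1 ≤ K) (γ : ℝ) (hγ0 : 0 < γ) (hγ1 : γ < 1)
    (cmin : ℝ) (hc0 : 0 < cmin) (hc1 : cmin ≤ 1)
    (it : ℕ → Fin K) (r c : ℕ → ℝ)
    (hr : ∀ t, 0 ≤ r t ∧ r t ≤ 1)
    (hc : ∀ t, cmin ≤ c t ∧ c t ≤ 1)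
    (w : ℕ → Fin K → ℝ) (p : ℕ → Fin K → ℝ) (ehat : ℕ → Fin K → ℝ)
    (hw0 : ∀ i, w 0 i = 1)
    (hp : ∀ t i, p t i = (1 - γ) * w t i / (∑ j, w t j) + γ / K)
    (hehat : ∀ t i, ehat t i = if i = it t then r t / (p t i * c t) else 0)
    (hwrec : ∀ t i, w (t + 1) i = w t i * Real.exp (γ * cmin * ehat t i / K))
    (j : Fin K) (T : ℕ) :
    (cmin * γ / K) * (∑ t ∈ range T, ehat t j) - Real.log K ≤
      ((cmin * γ / K) / (1 - γ)) * ∑ t ∈ range T, r t / c t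
        + ((Real.exp 1 - 2) * cmin * (γ / K) ^ 2 / (1 - γ)) *
            ∑ t ∈ range T, ∑ i, ehat t i :=
  exp3_bwk_main_recursion_bound_general K γ hγ0 hγ1 cmin hc0 it r c hr hc w p ehat hw0 hp hehat
    hwrec j T
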